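/- Let F_q be a finite field of odd order q and let γ ∈ F_q be θ-periodic with γ ∉ {0, 1, −1}. Then the set {x ∈ F_q : θ(x) = γ} has exactly 2 elements, exactly one of which is θ-periodic. -/

import Mathlib

/-- The map `θ(x) = (x + x⁻¹)/2` on a field (with the convention `0⁻¹ = 0`). -/
noncomputable def theta {K : Type*} [Field K] (x : K) : K := (x + x⁻¹) / 2

/-- An element `x` is θ-periodic if `θ^[k](x) = x` for some `k ≥ 1`. -/
def IsThetaPeriodic {K : Type*} [Field K] (x : K) : Prop :=
  ∃ k : ℕ, 1 ≤ k ∧ theta^[k] x = x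

lemma iterate_mul_fixed {K : Type*} [Field K] {x : K} {k : ℕ} (h : theta^[k] x = x)
    (n : ℕ) : theta^[k * n] x = x := by
  rw [Function.iterate_mul]
  exact Function.iterate_fixed h n

/-- Let `F_q` be a finite field of odd order `q` and `γ ∈ F_q` θ-periodic with
`γ ∉ {0, 1, −1}`. Then `θ⁻¹(γ)` has exactly two elements, exactly one of which is
θ-periodic. -/
theorem theta_preimage_of_periodic (F : Type*) [Field F] [Fintype F]
    (hq : Odd (Fintype.card F)) (γ : F) (hper : IsThetaPeriodic γ)
    (h0 : γ ≠ 0) (h1 : γ ≠ 1) (hm1 : γ ≠ -1) :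
    {x : F | theta x = γ}.ncard = 2 ∧
    ∃! x : F, theta x = γ ∧ IsThetaPeriodic x := by
  have two_ne : (2 : F) ≠ 0 := by
    intro h
    have h2 : (ringChar F) ∣ 2 := (ringChar.spec F 2).mp (by exact_mod_cast h)
    have hp : (ringChar F).Prime := CharP.char_is_prime F (ringChar F)
    have hchar : ringChar F = 2 := (Nat.prime_dvd_prime_iff_eq hp Nat.prime_two).mp h2
    have heven := (FiniteField.even_card_iff_char_two).mp hchar
    have hodd := Nat.odd_iff.mp hq
    omega
  obtain ⟨k, hk1, hkγ⟩ := hper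
  set β := theta^[k - 1] γ with hβdef
  have hkk : k - 1 + 1 = k := Nat.succ_pred_eq_of_pos hk1
  have hβγ : theta β = γ := by
    conv_rhs => rw [← hkγ, ← hkk, Function.iterate_succ_apply']
  have hβfix : theta^[k] β = β := by
    rw [hβdef, ← Function.iterate_add_apply, Nat.add_comm, Function.iterate_add_apply, hkγ]
  have hβper : IsThetaPeriodic β := ⟨k, hk1, hβfix⟩
  have theta0 : theta (0 : F) = 0 := by simp [theta]
  have hβ0 : β ≠ 0 := by
    intro h; apply h0; rw [← hβγ, h, theta0]
  have hβ1 : β ≠ 1 := by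
    intro h; apply h1; rw [← hβγ, h]
    simp only [theta, inv_one]
    rw [div_eq_one_iff_eq two_ne]; ring
  have hβm1 : β ≠ -1 := by
    intro h; apply hm1; rw [← hβγ, h]
    simp only [theta]
    rw [inv_neg, inv_one, div_eq_iff two_ne]; ring
  have hββ : β ≠ β⁻¹ := by
    intro h
    have hsq : β * β = 1 := by
      nth_rewrite 2 [h]
      exact mul_inv_cancel₀ hβ0
    rcases mul_self_eq_one_iff.mp hsq with h' | h'
    · exact hβ1 h'
    · exact hβm1 h'
  have hfiber : {x : F | theta x = γ} = {β, β⁻¹} := by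
    ext x
    simp only [Set.mem_setOf_eq, Set.mem_insert_iff, Set.mem_singleton_iff]
    constructor
    · intro hx
      have hx0 : x ≠ 0 := by
        intro h; apply h0; rw [← hx, h, theta0]
      have h' : (x + x⁻¹) / 2 = (β + β⁻¹) / 2 := by
        rw [show (x + x⁻¹) / 2 = theta x from rfl, show (β + β⁻¹) / 2 = theta β from rfl,
          hx, hβγ]
      field_simp at h'
      have hquad2 : 2 * ((x - β) * (x * β - 1)) = 0 := by linear_combination 2 * h'
      have hquad : (x - β) * (x * β - 1) = 0 :=
        (mul_eq_zero.mp hquad2).resolve_left two_ne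
      rcases mul_eq_zero.mp hquad with h | h
      · left; exact sub_eq_zero.mp h
      · right
        exact eq_inv_of_mul_eq_one_left (sub_eq_zero.mp h)
    · intro hx
      rcases hx with h | h
      · rw [h]; exact hβγ
      · rw [h, ← hβγ]
        simp only [theta, inv_inv]
        ring_nf
  refine ⟨by rw [hfiber]; exact Set.ncard_pair hββ, β, ⟨hβγ, hβper⟩, ?_⟩
  rintro x ⟨hxγ, hxper⟩
  have hx : x = β ∨ x = β⁻¹ := by
    have hmem : x ∈ {x : F | theta x = γ} := hxγ
    rw [hfiber] at hmem
    exact hmem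
  rcases hx with h | h
  · exact h
  · exfalso
    obtain ⟨k', hk'1, hk'⟩ := hxper
    rw [h] at hk'
    have hmβ : theta^[k * k'] β = β := iterate_mul_fixed hβfix k'
    have hmβi : theta^[k * k'] β⁻¹ = β⁻¹ := by
      rw [Nat.mul_comm]; exact iterate_mul_fixed hk' k
    obtain ⟨m, hm⟩ : ∃ m, k * k' = m + 1 := ⟨k * k' - 1, by
      have := Nat.mul_pos hk1 hk'1; omega⟩
    rw [hm] at hmβ hmβi
    apply hββ
    calc β = theta^[m + 1] β := hmβ.symm
      _ = theta^[m] (theta β) := Function.iterate_succ_apply theta m β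
      _ = theta^[m] (theta β⁻¹) := by
          congr 1
          rw [hβγ, ← hβγ]
          simp only [theta, inv_inv]
          ring_nf
      _ = theta^[m + 1] β⁻¹ := (Function.iterate_succ_apply theta m β⁻¹).symm
      _ = β⁻¹ := hmβi
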